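/- arXiv:1206.2485 — 6 statements merged into one kernel-verified Lean document; each statement's English description precedes it below -/
import Mathlib

section
/- Let Ω be a Polish space with Borel σ-field B, and let μ_n (n ∈ ℕ) and μ be probability measures on the product space Ω × Ω (with the product σ-field B ⊗ B). Assume that for every n the marginals of μ_n coincide with those of μ, i.e. μ_n(A × Ω) = μ(A × Ω) and μ_n(Ω × A) = μ(Ω × A) for every A ∈ B. Then μ_n converges weakly to μ if and only if μ_n(A × B) → μ(A × B) for all A, B ∈ B. -/
/-!
Weak convergence gives `limsup μₙ F ≤ ν F` for closed `F`. Approximating Borel sets `A`, `B` from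
inside by closed `F`, `G` for the marginals of `ν`, the part of `A × B` outside `F × G` lies in
`(A \ F) × Ω ∪ Ω × (B \ G)`, whose `μₙ`-measure is the same small number for every `n` because
the marginals agree; hence `limsup μₙ (A × B) ≤ ν (A × B)`. The matching liminf bound comes from
the decomposition `(A × B)ᶜ = Aᶜ × Ω ∪ A × Bᶜ`: the first piece has constant measure and the
limsup bound applies to the rectangle `A × Bᶜ`.

Conversely, measurable rectangles form a π-system containing arbitrarily small neighbourhoods of
every point of the second countable space `Ω × Ω`, and convergence on such a π-system already
implies weak convergence.
-/

open MeasureTheory Filter Topology Set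
open scoped ENNReal

namespace MeasureTheory

variable {X Y ι : Type*} [MeasurableSpace X] [MeasurableSpace Y]

lemma Measure.fst_eq_fst_of_measure_prod_univ_eq {ρ ρ' : Measure (X × Y)}
    (h : ∀ s, MeasurableSet s → ρ (s ×ˢ univ) = ρ' (s ×ˢ univ)) : ρ.fst = ρ'.fst := by
  ext s hs
  simpa only [Measure.fst_apply hs, prod_univ] using h s hs

lemma Measure.snd_eq_snd_of_measure_univ_prod_eq {ρ ρ' : Measure (X × Y)}
    (h : ∀ t, MeasurableSet t → ρ (univ ×ˢ t) = ρ' (univ ×ˢ t)) : ρ.snd = ρ'.snd := by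
  ext t ht
  simpa only [Measure.snd_apply ht, univ_prod] using h t ht

lemma measure_prod_le_add_fst_add_snd (ρ : Measure (X × Y)) (s s' : Set X)
    (t t' : Set Y) : ρ (s ×ˢ t) ≤ ρ (s' ×ˢ t') + ρ.fst (s \ s') + ρ.snd (t \ t') := by
  have hcover : s ×ˢ t ⊆ s' ×ˢ t' ∪ Prod.fst ⁻¹' (s \ s') ∪ Prod.snd ⁻¹' (t \ t') := by
    rintro ⟨x, y⟩ ⟨hx, hy⟩
    by_cases hx' : x ∈ s' <;> by_cases hy' : y ∈ t' <;> simp_all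
  calc ρ (s ×ˢ t)
      ≤ ρ (s' ×ˢ t') + ρ (Prod.fst ⁻¹' (s \ s')) + ρ (Prod.snd ⁻¹' (t \ t')) :=
        (measure_mono hcover).trans <|
          (measure_union_le _ _).trans (by gcongr; exact measure_union_le _ _)
    _ ≤ ρ (s' ×ˢ t') + ρ.fst (s \ s') + ρ.snd (t \ t') := by
        gcongr
        exacts [Measure.le_map_apply measurable_fst.aemeasurable _,
          Measure.le_map_apply measurable_snd.aemeasurable _]

section Portmanteau

variable [TopologicalSpace X] [TopologicalSpace Y] {L : Filter ι} {μ : ι → Measure (X × Y)}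
  {ν : Measure (X × Y)}

lemma limsup_measure_prod_le_add_fst_add_snd
    (h_closed : ∀ F, IsClosed F → limsup (fun i ↦ μ i F) L ≤ ν F)
    (hfst : ∀ i, (μ i).fst = ν.fst) (hsnd : ∀ i, (μ i).snd = ν.snd)
    (s : Set X) (t : Set Y) {F : Set X} {G : Set Y} (hF : IsClosed F) (hG : IsClosed G) :
    limsup (fun i ↦ μ i (s ×ˢ t)) L ≤ ν (F ×ˢ G) + ν.fst (s \ F) + ν.snd (t \ G) := by
  rcases L.eq_or_neBot with rfl | hL
  · simp
  calc limsup (fun i ↦ μ i (s ×ˢ t)) L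
      ≤ limsup (fun i ↦ μ i (F ×ˢ G) + (ν.fst (s \ F) + ν.snd (t \ G))) L := by
        refine limsup_le_limsup (.of_forall fun i ↦ ?_)
        simpa only [hfst i, hsnd i, add_assoc] using
          measure_prod_le_add_fst_add_snd (μ i) s F t G
    _ = limsup (fun i ↦ μ i (F ×ˢ G)) L + (ν.fst (s \ F) + ν.snd (t \ G)) :=
        limsup_add_const L _ _ (by isBoundedDefault) (by isBoundedDefault)
    _ ≤ ν (F ×ˢ G) + ν.fst (s \ F) + ν.snd (t \ G) := by
        rw [add_assoc]
        gcongr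
        exact h_closed _ (hF.prod hG)

variable [OpensMeasurableSpace X] [OpensMeasurableSpace Y]

lemma limsup_measure_prod_le [IsFiniteMeasure ν] [ν.fst.WeaklyRegular] [ν.snd.WeaklyRegular]
    (h_closed : ∀ F, IsClosed F → limsup (fun i ↦ μ i F) L ≤ ν F)
    (hfst : ∀ i, (μ i).fst = ν.fst) (hsnd : ∀ i, (μ i).snd = ν.snd)
    {s : Set X} {t : Set Y} (hs : MeasurableSet s) (ht : MeasurableSet t) :
    limsup (fun i ↦ μ i (s ×ˢ t)) L ≤ ν (s ×ˢ t) := by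
  refine ENNReal.le_of_forall_pos_le_add fun ε hε _ ↦ ?_
  have hε2 : (ε / 2 : ℝ≥0∞) ≠ 0 := by simpa using hε.ne'
  obtain ⟨F, hFs, hF, hsF⟩ := hs.exists_isClosed_sdiff_lt (measure_ne_top ν.fst s) hε2
  obtain ⟨G, hGt, hG, htG⟩ := ht.exists_isClosed_sdiff_lt (measure_ne_top ν.snd t) hε2
  calc limsup (fun i ↦ μ i (s ×ˢ t)) L
      ≤ ν (F ×ˢ G) + ν.fst (s \ F) + ν.snd (t \ G) :=
        limsup_measure_prod_le_add_fst_add_snd h_closed hfst hsnd s t hF hG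
    _ ≤ ν (s ×ˢ t) + (ε / 2 + ε / 2) := by
        rw [add_assoc]
        gcongr
    _ = ν (s ×ˢ t) + ε := by rw [ENNReal.add_halves]

lemma le_liminf_measure_prod [IsProbabilityMeasure ν] [∀ i, IsProbabilityMeasure (μ i)]
    [ν.fst.WeaklyRegular] [ν.snd.WeaklyRegular]
    (h_closed : ∀ F, IsClosed F → limsup (fun i ↦ μ i F) L ≤ ν F)
    (hfst : ∀ i, (μ i).fst = ν.fst) (hsnd : ∀ i, (μ i).snd = ν.snd)
    {s : Set X} {t : Set Y} (hs : MeasurableSet s) (ht : MeasurableSet t) :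
    ν (s ×ˢ t) ≤ liminf (fun i ↦ μ i (s ×ˢ t)) L := by
  rcases L.eq_or_neBot with rfl | hL
  · simp
  have hcompl : (s ×ˢ t)ᶜ = sᶜ ×ˢ univ ∪ s ×ˢ tᶜ := by
    ext ⟨x, y⟩
    by_cases x ∈ s <;> simp_all
  have hdisj : Disjoint (sᶜ ×ˢ (univ : Set Y)) (s ×ˢ tᶜ) :=
    disjoint_prod.2 (Or.inl disjoint_compl_left)
  have hsplit (ρ : Measure (X × Y)) : ρ (s ×ˢ t)ᶜ = ρ.fst sᶜ + ρ (s ×ˢ tᶜ) := by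
    rw [hcompl, measure_union hdisj (hs.prod ht.compl), Measure.fst_apply hs.compl, prod_univ]
  refine le_measure_liminf_of_limsup_measure_compl_le (hs.prod ht) ?_
  calc limsup (fun i ↦ μ i (s ×ˢ t)ᶜ) L = ν.fst sᶜ + limsup (fun i ↦ μ i (s ×ˢ tᶜ)) L := by
        simp_rw [hsplit, hfst]
        exact limsup_const_add L _ _ (by isBoundedDefault) (by isBoundedDefault)
    _ ≤ ν.fst sᶜ + ν (s ×ˢ tᶜ) := by
        gcongr
        exact limsup_measure_prod_le h_closed hfst hsnd hs ht.compl
    _ = ν (s ×ˢ t)ᶜ := (hsplit ν).symm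

lemma tendsto_measure_prod_of_forall_isClosed [IsProbabilityMeasure ν]
    [∀ i, IsProbabilityMeasure (μ i)] [ν.fst.WeaklyRegular] [ν.snd.WeaklyRegular]
    (h_closed : ∀ F, IsClosed F → limsup (fun i ↦ μ i F) L ≤ ν F)
    (hfst : ∀ i, (μ i).fst = ν.fst) (hsnd : ∀ i, (μ i).snd = ν.snd)
    {s : Set X} {t : Set Y} (hs : MeasurableSet s) (ht : MeasurableSet t) :
    Tendsto (fun i ↦ μ i (s ×ˢ t)) L (𝓝 (ν (s ×ˢ t))) :=
  tendsto_of_le_liminf_of_limsup_le (le_liminf_measure_prod h_closed hfst hsnd hs ht)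
    (limsup_measure_prod_le h_closed hfst hsnd hs ht)

end Portmanteau

lemma ProbabilityMeasure.tendsto_of_forall_tendsto_measure_prod [TopologicalSpace X]
    [TopologicalSpace Y] [SecondCountableTopology X] [SecondCountableTopology Y]
    [OpensMeasurableSpace X] [OpensMeasurableSpace Y] {L : Filter ι} [L.IsCountablyGenerated]
    {μ : ι → ProbabilityMeasure (X × Y)} {ν : ProbabilityMeasure (X × Y)}
    (h : ∀ s t, MeasurableSet s → MeasurableSet t →
      Tendsto (fun i ↦ (μ i : Measure (X × Y)) (s ×ˢ t)) L (𝓝 ((ν : Measure (X × Y)) (s ×ˢ t)))) :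
    Tendsto μ L (𝓝 ν) := by
  refine isPiSystem_prod.tendsto_probabilityMeasure_of_tendsto_of_mem ?_ ?_ ?_
  · rintro _ ⟨s, hs, t, ht, rfl⟩
    exact hs.prod ht
  · intro u hu x hx
    obtain ⟨a, b, ha, hb, hxa, hxb, hab⟩ := isOpen_prod_iff.1 hu x.1 x.2 hx
    exact ⟨a ×ˢ b, mem_image2_of_mem ha.measurableSet hb.measurableSet,
      prod_mem_nhds (ha.mem_nhds hxa) (hb.mem_nhds hxb), hab⟩
  · rintro _ ⟨s, hs, t, ht, rfl⟩
    exact ENNReal.tendsto_coe.1 <| by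
      simpa only [ProbabilityMeasure.ennreal_coeFn_eq_coeFn_toMeasure] using h s t hs ht

end MeasureTheory

/-- Let `Ω` be a Polish space with Borel σ-field, and let `μ n` (`n ∈ ℕ`)
and `ν` be probability measures on `Ω × Ω` (product σ-field). If for every `n` the marginals
of `μ n` coincide with those of `ν`, then `μ n` converges weakly to `ν` if and only if
`μ n (A ×ˢ B) → ν (A ×ˢ B)` for all Borel sets `A, B`. -/
theorem weak_convergence_iff_rectangles
    {Ω : Type*} [TopologicalSpace Ω] [PolishSpace Ω] [MeasurableSpace Ω] [BorelSpace Ω]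
    (μ : ℕ → Measure (Ω × Ω)) (ν : Measure (Ω × Ω))
    [∀ n, IsProbabilityMeasure (μ n)] [IsProbabilityMeasure ν]
    (hmarg1 : ∀ (A : Set Ω), MeasurableSet A → ∀ n, μ n (A ×ˢ Set.univ) = ν (A ×ˢ Set.univ))
    (hmarg2 : ∀ (A : Set Ω), MeasurableSet A → ∀ n, μ n (Set.univ ×ˢ A) = ν (Set.univ ×ˢ A)) :
    (∀ f : BoundedContinuousFunction (Ω × Ω) ℝ,
        Tendsto (fun n => ∫ p, f p ∂(μ n)) atTop (𝓝 (∫ p, f p ∂ν))) ↔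
      (∀ A B : Set Ω, MeasurableSet A → MeasurableSet B →
        Tendsto (fun n => μ n (A ×ˢ B)) atTop (𝓝 (ν (A ×ˢ B)))) := by
  let P : ℕ → ProbabilityMeasure (Ω × Ω) := fun n ↦ ⟨μ n, inferInstance⟩
  let Q : ProbabilityMeasure (Ω × Ω) := ⟨ν, inferInstance⟩
  have hfst n : (μ n).fst = ν.fst :=
    Measure.fst_eq_fst_of_measure_prod_univ_eq fun A hA ↦ hmarg1 A hA n
  have hsnd n : (μ n).snd = ν.snd :=
    Measure.snd_eq_snd_of_measure_univ_prod_eq fun A hA ↦ hmarg2 A hA n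
  refine (ProbabilityMeasure.tendsto_iff_forall_integral_tendsto (μs := P) (μ := Q)).symm.trans
    ⟨fun hPQ A B hA hB ↦ ?_, fun h ↦ ProbabilityMeasure.tendsto_of_forall_tendsto_measure_prod h⟩
  exact tendsto_measure_prod_of_forall_isClosed
    (fun F hF ↦ ProbabilityMeasure.limsup_measure_closed_le_of_tendsto hPQ hF) hfst hsnd hA hB
end

section
/- Let Ω be a Polish space with Borel σ-field B, and let μ_n (n ∈ ℕ) and μ be probability measures on Ω × Ω. If μ_n(A × B) → μ(A × B) for all Borel sets A, B ∈ B, then for every compact set K ⊆ Ω × Ω one has limsup_{n→∞} μ_n(K) ≤ μ(K). -/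
/-!
By outer regularity it suffices to bound `limsup μ n K` by `ν U` for every open `U ⊇ K`.
Compactness squeezes a finite union `V` of open rectangles between `K` and `U`, and by
inclusion–exclusion (rectangles being closed under intersection) convergence on rectangles
passes to `V`, so `limsup μ n K ≤ lim μ n V = ν V ≤ ν U`.
-/

open MeasureTheory Filter Topology Set

section Convergence

variable {α ι κ : Type*} [MeasurableSpace α] {l : Filter ι} {μ : ι → Measure α} {ν : Measure α}
  [∀ i, IsFiniteMeasure (μ i)] [IsFiniteMeasure ν]

theorem tendsto_measure_union {s t : Set α} (ht : MeasurableSet t)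
    (hs_lim : Tendsto (fun i ↦ μ i s) l (𝓝 (ν s)))
    (ht_lim : Tendsto (fun i ↦ μ i t) l (𝓝 (ν t)))
    (hst_lim : Tendsto (fun i ↦ μ i (s ∩ t)) l (𝓝 (ν (s ∩ t)))) :
    Tendsto (fun i ↦ μ i (s ∪ t)) l (𝓝 (ν (s ∪ t))) := by
  have union_eq (m : Measure α) [IsFiniteMeasure m] : m (s ∪ t) = m s + m t - m (s ∩ t) :=
    ENNReal.eq_sub_of_add_eq (measure_ne_top m _) (measure_union_add_inter s ht)
  simp only [union_eq]
  exact ENNReal.Tendsto.sub (hs_lim.add ht_lim) hst_lim (.inr (measure_ne_top ν _))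

theorem tendsto_measure_biUnion_finset {C : Set (Set α)} (hC_meas : ∀ s ∈ C, MeasurableSet s)
    (hC_inter : ∀ s ∈ C, ∀ t ∈ C, s ∩ t ∈ C)
    (hC_lim : ∀ s ∈ C, Tendsto (fun i ↦ μ i s) l (𝓝 (ν s)))
    (t : Finset κ) (f : κ → Set α) (hf : ∀ j ∈ t, f j ∈ C) :
    Tendsto (fun i ↦ μ i (⋃ j ∈ t, f j)) l (𝓝 (ν (⋃ j ∈ t, f j))) := by
  classical
  induction t using Finset.induction_on generalizing f with
  | empty => simpa using tendsto_const_nhds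
  | insert a t _ ih =>
    simp only [Finset.forall_mem_insert] at hf
    simp only [Finset.set_biUnion_insert]
    refine tendsto_measure_union
      (t.measurableSet_biUnion fun j hj ↦ hC_meas _ (hf.2 j hj)) (hC_lim _ hf.1) (ih f hf.2) ?_
    rw [inter_iUnion₂]
    exact ih (fun j ↦ f a ∩ f j) fun j hj ↦ hC_inter _ hf.1 _ (hf.2 j hj)

end Convergence

theorem IsCompact.exists_finset_biUnion_prod_subset {X Y : Type*} [TopologicalSpace X]
    [TopologicalSpace Y] {K U : Set (X × Y)} (hK : IsCompact K) (hU : IsOpen U) (hKU : K ⊆ U) :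
    ∃ t : Finset (Set X × Set Y), (∀ p ∈ t, IsOpen p.1 ∧ IsOpen p.2) ∧
      K ⊆ ⋃ p ∈ t, p.1 ×ˢ p.2 ∧ ⋃ p ∈ t, p.1 ×ˢ p.2 ⊆ U := by
  classical
  have rect (x : X × Y) (hx : x ∈ K) : ∃ p : Set X × Set Y,
      IsOpen p.1 ∧ IsOpen p.2 ∧ x ∈ p.1 ×ˢ p.2 ∧ p.1 ×ˢ p.2 ⊆ U := by
    obtain ⟨A, B, hA, hB, hxA, hxB, hAB⟩ := isOpen_prod_iff.mp hU x.1 x.2 (hKU hx)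
    exact ⟨(A, B), hA, hB, ⟨hxA, hxB⟩, hAB⟩
  choose! p hp₁ hp₂ hxp hpU using rect
  obtain ⟨s, hsK, hKs⟩ := hK.elim_nhds_subcover (fun x ↦ (p x).1 ×ˢ (p x).2)
    fun x hx ↦ ((hp₁ x hx).prod (hp₂ x hx)).mem_nhds (hxp x hx)
  refine ⟨s.image p, ?_, ?_, ?_⟩
  · exact Finset.forall_mem_image.2 fun x hx ↦ ⟨hp₁ x (hsK x hx), hp₂ x (hsK x hx)⟩
  · rwa [Finset.set_biUnion_finset_image]
  · rw [Finset.set_biUnion_finset_image]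
    exact iUnion₂_subset fun x hx ↦ hpU x (hsK x hx)

/-- Let `Ω` be a Polish space with Borel σ-field, and let `μ n` (`n ∈ ℕ`)
and `ν` be probability measures on `Ω × Ω`. If `μ n (A ×ˢ B) → ν (A ×ˢ B)` for all Borel
sets `A, B ⊆ Ω`, then for every compact `K ⊆ Ω × Ω` one has `limsup_n μ n K ≤ ν K`. -/
theorem limsup_le_of_rectangles_tendsto
    {Ω : Type*} [TopologicalSpace Ω] [PolishSpace Ω] [MeasurableSpace Ω] [BorelSpace Ω]
    (μ : ℕ → Measure (Ω × Ω)) (ν : Measure (Ω × Ω))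
    [∀ n, IsProbabilityMeasure (μ n)] [IsProbabilityMeasure ν]
    (h : ∀ A B : Set Ω, MeasurableSet A → MeasurableSet B →
      Tendsto (fun n => μ n (A ×ˢ B)) atTop (𝓝 (ν (A ×ˢ B))))
    (K : Set (Ω × Ω)) (hK : IsCompact K) :
    Filter.limsup (fun n => μ n K) atTop ≤ ν K := by
  rw [Set.measure_eq_iInf_isOpen K ν]
  refine le_iInf₂ fun U hKU ↦ le_iInf fun hU ↦ ?_
  obtain ⟨t, ht_open, hKV, hVU⟩ := hK.exists_finset_biUnion_prod_subset hU hKU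
  have hV_lim := tendsto_measure_biUnion_finset (μ := μ) (ν := ν)
    (C := image2 (· ×ˢ ·) {A | MeasurableSet A} {B | MeasurableSet B})
    (by rintro _ ⟨A, hA, B, hB, rfl⟩; exact hA.prod hB)
    (by rintro _ ⟨A, hA, B, hB, rfl⟩ _ ⟨A', hA', B', hB', rfl⟩
        exact ⟨_, hA.inter hA', _, hB.inter hB', prod_inter_prod.symm⟩)
    (by rintro _ ⟨A, hA, B, hB, rfl⟩; exact h A B hA hB)
    t (fun p ↦ p.1 ×ˢ p.2)
    fun p hp ↦ ⟨_, (ht_open p hp).1.measurableSet, _, (ht_open p hp).2.measurableSet, rfl⟩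
  calc limsup (fun n ↦ μ n K) atTop
      ≤ limsup (fun n ↦ μ n (⋃ p ∈ t, p.1 ×ˢ p.2)) atTop :=
        limsup_le_limsup (.of_forall fun n ↦ measure_mono hKV)
    _ = ν (⋃ p ∈ t, p.1 ×ˢ p.2) := hV_lim.limsup_eq
    _ ≤ ν U := measure_mono hVU
end

section
/- Let Ω be a Polish space with Borel σ-field B, P a Borel probability measure on Ω, and T : Ω → Ω a measurable map preserving P (i.e. P ∘ T^{-1} = P). Then T is strongly mixing, i.e. P(A ∩ T^{-n}B) → P(A)·P(B) for all A, B ∈ B, if and only if the image measures P ∘ (T^0, T^n)^{-1} (the laws of ω ↦ (ω, T^n ω) under P, as probability measures on Ω × Ω) converge weakly to the product measure P ⊗ P as n → ∞. -/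
open MeasureTheory Filter Topology Set
open scoped BoundedContinuousFunction

/-!
On a measurable rectangle, `P.map (fun ω => (ω, T^[n] ω))` takes the value
`P (A ∩ T^[n] ⁻¹' B)` and `P.prod P` the value `P A * P B`, so mixing says exactly that these
measures converge on rectangles. Rectangles with open sides form a π-system containing arbitrarily
small neighbourhoods of every point of the second-countable space `Ω × Ω`, hence convergence on
rectangles gives weak convergence. Conversely, both measures have marginals `P`, and for any such
coupling `ρ`, replacing `1_A ⊗ 1_B` by `f ⊗ g` with `f`, `g` bounded continuous changes
`∫ · ∂ρ` by at most `‖1_B - g‖₁ + ‖g‖∞ ‖1_A - f‖₁`, uniformly in `ρ`; since bounded continuous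
functions are dense in `L¹(P)`, weak convergence gives convergence on rectangles.
-/

lemma tendsto_of_forall_approx {ι : Type*} {l : Filter ι} {x : ι → ℝ} {L : ℝ}
    (h : ∀ ε > 0, ∃ (y : ι → ℝ) (L' : ℝ),
      Tendsto y l (𝓝 L') ∧ (∀ i, |x i - y i| ≤ ε) ∧ |L - L'| ≤ ε) :
    Tendsto x l (𝓝 L) := by
  refine Metric.tendsto_nhds.mpr fun ε hε => ?_
  obtain ⟨y, L', hy, hxy, hL⟩ := h (ε / 3) (by positivity)
  filter_upwards [Metric.tendsto_nhds.mp hy (ε / 3) (by positivity)] with i hi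
  rw [Real.dist_eq] at hi ⊢
  have := abs_sub_le (x i) (y i) L
  have := abs_sub_le (y i) L' L
  rw [abs_sub_comm L'] at this
  linarith [hxy i]

section Coupling

variable {α β : Type*} [MeasurableSpace α] [MeasurableSpace β] [TopologicalSpace α]
  [TopologicalSpace β]

lemma abs_measureReal_prod_sub_integral_mul_le [OpensMeasurableSpace α] [OpensMeasurableSpace β]
    (ρ : Measure (α × β)) [IsFiniteMeasure ρ]
    {A : Set α} {B : Set β} (hA : MeasurableSet A) (hB : MeasurableSet B)
    (f : α →ᵇ ℝ) (g : β →ᵇ ℝ) :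
    |ρ.real (A ×ˢ B) - ∫ p, f p.1 * g p.2 ∂ρ| ≤
      ∫ y, ‖B.indicator 1 y - g y‖ ∂ρ.snd + ‖g‖ * ∫ x, ‖A.indicator 1 x - f x‖ ∂ρ.fst := by
  set a : α → ℝ := A.indicator 1
  set b : β → ℝ := B.indicator 1
  have ha : Integrable (fun x => ‖a x - f x‖) ρ.fst :=
    (((integrable_const (1 : ℝ)).indicator hA).sub (f.integrable _)).norm
  have hb : Integrable (fun y => ‖b y - g y‖) ρ.snd :=
    (((integrable_const (1 : ℝ)).indicator hB).sub (g.integrable _)).norm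
  have ha' : Integrable (fun p : α × β => ‖a p.1 - f p.1‖) ρ := ha.comp_measurable measurable_fst
  have hb' : Integrable (fun p : α × β => ‖b p.2 - g p.2‖) ρ := hb.comp_measurable measurable_snd
  have hab : Integrable (fun p : α × β => a p.1 * b p.2) ρ :=
    ((integrable_const (1 : ℝ)).indicator (hA.prod hB)).congr
      (ae_of_all _ fun _ => indicator_prod_one)
  have hfg : Integrable (fun p : α × β => f p.1 * g p.2) ρ :=
    .of_bound ((f.continuous.measurable.comp measurable_fst).mul
      (g.continuous.measurable.comp measurable_snd)).aestronglyMeasurable (‖f‖ * ‖g‖)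
      (ae_of_all _ fun p => by
        rw [norm_mul]
        exact mul_le_mul (f.norm_coe_le_norm _) (g.norm_coe_le_norm _) (norm_nonneg _)
          (norm_nonneg _))
  have hrect : ρ.real (A ×ˢ B) = ∫ p, a p.1 * b p.2 ∂ρ := by
    rw [← integral_indicator_one (hA.prod hB)]
    exact integral_congr_ae (ae_of_all _ fun _ => indicator_prod_one)
  calc |ρ.real (A ×ˢ B) - ∫ p, f p.1 * g p.2 ∂ρ|
      = ‖∫ p, (a p.1 * (b p.2 - g p.2) + g p.2 * (a p.1 - f p.1)) ∂ρ‖ := by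
        rw [hrect, ← integral_sub hab hfg, Real.norm_eq_abs]
        congr 2
        ext p
        ring
    _ ≤ ∫ p, (‖b p.2 - g p.2‖ + ‖g‖ * ‖a p.1 - f p.1‖) ∂ρ := by
        refine norm_integral_le_of_norm_le (hb'.add (ha'.const_mul _)) (ae_of_all _ fun p => ?_)
        refine (norm_add_le _ _).trans (add_le_add ?_ ?_) <;> rw [norm_mul]
        · exact mul_le_of_le_one_left (norm_nonneg _)
            ((norm_indicator_le_norm_self 1 _).trans_eq norm_one)
        · exact mul_le_mul_of_nonneg_right (g.norm_coe_le_norm _) (norm_nonneg _)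
    _ = ∫ y, ‖b y - g y‖ ∂ρ.snd + ‖g‖ * ∫ x, ‖a x - f x‖ ∂ρ.fst := by
        rw [integral_add hb' (ha'.const_mul _), integral_const_mul, Measure.snd, Measure.fst,
          integral_map measurable_snd.aemeasurable hb.1,
          integral_map measurable_fst.aemeasurable ha.1]

lemma tendsto_measureReal_prod_of_tendsto_integral_mul
    [NormalSpace α] [BorelSpace α] [NormalSpace β] [BorelSpace β]
    {P : Measure α} {Q : Measure β} [IsFiniteMeasure P] [IsFiniteMeasure Q]
    [P.WeaklyRegular] [Q.WeaklyRegular] {ι : Type*} {l : Filter ι}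
    {μ : ι → Measure (α × β)} [∀ i, IsFiniteMeasure (μ i)] {ν : Measure (α × β)}
    [IsFiniteMeasure ν] (hμP : ∀ i, (μ i).fst = P) (hμQ : ∀ i, (μ i).snd = Q)
    (hνP : ν.fst = P) (hνQ : ν.snd = Q)
    (h : ∀ (f : α →ᵇ ℝ) (g : β →ᵇ ℝ),
      Tendsto (fun i => ∫ p, f p.1 * g p.2 ∂μ i) l (𝓝 (∫ p, f p.1 * g p.2 ∂ν)))
    {A : Set α} {B : Set β} (hA : MeasurableSet A) (hB : MeasurableSet B) :
    Tendsto (fun i => (μ i).real (A ×ˢ B)) l (𝓝 (ν.real (A ×ˢ B))) := by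
  refine tendsto_of_forall_approx fun ε hε => ?_
  have hA1 : Integrable (A.indicator 1) P := (integrable_const (1 : ℝ)).indicator hA
  have hB1 : Integrable (B.indicator 1) Q := (integrable_const (1 : ℝ)).indicator hB
  obtain ⟨g, hg, -⟩ := hB1.exists_boundedContinuous_integral_sub_le (half_pos hε)
  obtain ⟨f, hf, -⟩ := hA1.exists_boundedContinuous_integral_sub_le
    (show 0 < ε / 2 / (‖g‖ + 1) by positivity)
  have hgf : ‖g‖ * ∫ x, ‖A.indicator 1 x - f x‖ ∂P ≤ ε / 2 := by
    calc ‖g‖ * ∫ x, ‖A.indicator 1 x - f x‖ ∂P ≤ (‖g‖ + 1) * (ε / 2 / (‖g‖ + 1)) := by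
          gcongr
          linarith
      _ = ε / 2 := mul_div_cancel₀ _ (by positivity)
  have key (ρ : Measure (α × β)) [IsFiniteMeasure ρ] (hρP : ρ.fst = P) (hρQ : ρ.snd = Q) :
      |ρ.real (A ×ˢ B) - ∫ p, f p.1 * g p.2 ∂ρ| ≤ ε := by
    have := abs_measureReal_prod_sub_integral_mul_le ρ hA hB f g
    rw [hρP, hρQ] at this
    linarith
  exact ⟨fun i => ∫ p, f p.1 * g p.2 ∂μ i, ∫ p, f p.1 * g p.2 ∂ν, h f g,
    fun i => key (μ i) (hμP i) (hμQ i), key ν hνP hνQ⟩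

end Coupling

lemma tendsto_integral_of_tendsto_measure_prod {α β : Type*}
    [MeasurableSpace α] [TopologicalSpace α] [SecondCountableTopology α] [OpensMeasurableSpace α]
    [MeasurableSpace β] [TopologicalSpace β] [SecondCountableTopology β] [OpensMeasurableSpace β]
    {ι : Type*} {l : Filter ι} [l.IsCountablyGenerated]
    {μ : ι → Measure (α × β)} [∀ i, IsProbabilityMeasure (μ i)]
    {ν : Measure (α × β)} [IsProbabilityMeasure ν]
    (h : ∀ A B, MeasurableSet A → MeasurableSet B →
      Tendsto (fun i => μ i (A ×ˢ B)) l (𝓝 (ν (A ×ˢ B))))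
    (F : α × β →ᵇ ℝ) :
    Tendsto (fun i => ∫ p, F p ∂μ i) l (𝓝 (∫ p, F p ∂ν)) := by
  let μ' : ι → ProbabilityMeasure (α × β) := fun i => ⟨μ i, inferInstance⟩
  let ν' : ProbabilityMeasure (α × β) := ⟨ν, inferInstance⟩
  suffices Tendsto μ' l (𝓝 ν') from ProbabilityMeasure.tendsto_iff_forall_integral_tendsto.mp this F
  refine isPiSystem_prod.tendsto_probabilityMeasure_of_tendsto_of_mem ?_ ?_ ?_
  · rintro _ ⟨A, hA, B, hB, rfl⟩
    exact hA.prod hB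
  · rintro u hu ⟨x, y⟩ hxy
    obtain ⟨U, V, hU, hxU, hV, hyV, hUV⟩ := mem_nhds_prod_iff'.mp (hu.mem_nhds hxy)
    exact ⟨U ×ˢ V, mem_image2_of_mem hU.measurableSet hV.measurableSet,
      prod_mem_nhds (hU.mem_nhds hxU) (hV.mem_nhds hyV), hUV⟩
  · rintro _ ⟨A, hA, B, hB, rfl⟩
    exact (ENNReal.tendsto_toNNReal_iff (by simp) (by simp)).2 (h A B hA hB)

/-- Let `Ω` be a Polish space with Borel σ-field, `P` a Borel probability
measure on `Ω`, and `T : Ω → Ω` a measurable map preserving `P`. Then `T` is strongly mixing,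
i.e. `P (A ∩ T⁻ⁿ B) → P A * P B` for all Borel `A, B`, if and only if the laws of
`ω ↦ (ω, T^[n] ω)` under `P` converge weakly to the product measure `P ⊗ P`. -/
theorem stronglyMixing_iff_weak_convergence
    {Ω : Type*} [TopologicalSpace Ω] [PolishSpace Ω] [MeasurableSpace Ω] [BorelSpace Ω]
    (P : Measure Ω) [IsProbabilityMeasure P]
    (T : Ω → Ω) (hT : Measurable T) (hpres : P.map T = P) :
    (∀ A B : Set Ω, MeasurableSet A → MeasurableSet B →
        Tendsto (fun n => P (A ∩ T^[n] ⁻¹' B)) atTop (𝓝 (P A * P B))) ↔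
      (∀ f : BoundedContinuousFunction (Ω × Ω) ℝ,
        Tendsto (fun n => ∫ p, f p ∂(P.map (fun ω => (ω, T^[n] ω)))) atTop
          (𝓝 (∫ p, f p ∂(P.prod P)))) := by
  have hTn (n : ℕ) : MeasurePreserving T^[n] P P := (MeasurePreserving.mk hT hpres).iterate n
  have hgraph (n : ℕ) : Measurable fun ω => (ω, T^[n] ω) := measurable_id.prodMk (hTn n).measurable
  have (n : ℕ) : IsProbabilityMeasure (P.map fun ω => (ω, T^[n] ω)) :=
    Measure.isProbabilityMeasure_map (hgraph n).aemeasurable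
  have hrect (n : ℕ) {A B : Set Ω} (hA : MeasurableSet A) (hB : MeasurableSet B) :
      P.map (fun ω => (ω, T^[n] ω)) (A ×ˢ B) = P (A ∩ T^[n] ⁻¹' B) := by
    rw [Measure.map_apply (hgraph n) (hA.prod hB), mk_preimage_prod, preimage_id']
  constructor
  · intro hmix
    refine tendsto_integral_of_tendsto_measure_prod fun A B hA hB => ?_
    simpa only [hrect _ hA hB, Measure.prod_prod] using hmix A B hA hB
  · intro hweak A B hA hB
    have := tendsto_measureReal_prod_of_tendsto_integral_mul
      (fun n => by rw [Measure.fst_map_prodMk (hTn n).measurable, Measure.map_id'])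
      (fun n => by rw [Measure.snd_map_prodMk measurable_id', (hTn n).map_eq])
      Measure.fst_prod Measure.snd_prod
      (fun f g => hweak (f.compContinuous ⟨Prod.fst, continuous_fst⟩ *
        g.compContinuous ⟨Prod.snd, continuous_snd⟩)) hA hB
    rw [← ENNReal.tendsto_toReal_iff (by finiteness) (by finiteness)]
    simpa only [measureReal_def, hrect _ hA hB, Measure.prod_prod] using this
end

section
/- Let (Ω, F, P) be a probability space and H : Ω → {closed subsets of [0,∞)} a random closed set whose graph {(t, ω) ∈ [0,∞) × Ω : t ∈ H(ω)} is product-measurable. Assume the law of H is invariant under scaling, in the sense that for every c > 0 and every t > 0, P(t ∈ H and H is porous at t) = P(ct ∈ H and H is porous at ct) (this holds in particular whenever cH has the same distribution as H for all c > 0). Then the event {1 ∉ H} is contained in the event {H is porous at 1}, and P({H is porous at 1} \ {1 ∉ H}) = 0; that is, the events {1 ∉ H} and {H is porous at 1} coincide up to a P-null set. -/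
open MeasureTheory Filter Topology

/-- `gapLength H x ε` is the supremum of the lengths of the intervals contained in
`(x - ε, x + ε) \ H`. -/
noncomputable def gapLength (H : Set ℝ) (x ε : ℝ) : ℝ :=
  sSup {l : ℝ | ∃ a b : ℝ, l = b - a ∧ Set.Ioo a b ⊆ Set.Ioo (x - ε) (x + ε) \ H}

/-- A set `H ⊆ ℝ` is porous at `x` if `limsup_{ε → 0+} gapLength H x ε / ε > 0`. -/
def PorousAt (H : Set ℝ) (x : ℝ) : Prop :=
  0 < Filter.limsup (fun ε => gapLength H x ε / ε) (𝓝[>] (0 : ℝ))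

open Set Metric

/-!
If `1 ∉ H`, then, `H` being closed, a whole neighbourhood of `1` is a gap, so `H` is porous at `1`.

Conversely, a point `x` at which `H` is porous is not a Lebesgue density point of `H`: a gap of
length `κ ε` inside `(x - ε, x + ε)` leaves at most the proportion `1 - κ / 2` of that window
to `H`. By the density theorem the points of `H ω` at which `H ω` is porous form a Lebesgue-null
set, so by Fubini `P (t ∈ H ∧ H porous at t) = 0` for almost every `t > 0`, and scale invariance
moves this to `t = 1`. The porosity event need not be measurable; Fubini is applied to the
measurable event of a density deficit along rational radii, which contains it.
-/

section Sparse

variable {H : Set ℝ} {x ε a b : ℝ}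

lemma sub_le_two_mul_of_Ioo_subset (h : Ioo a b ⊆ Ioo (x - ε) (x + ε)) (hε : 0 ≤ ε) :
    b - a ≤ 2 * ε := by
  rcases lt_or_ge a b with hab | hab
  · have := (Ioo_subset_Ioo_iff hab).1 h
    linarith
  · linarith

lemma gapLength_bddAbove (hε : 0 ≤ ε) :
    BddAbove {l : ℝ | ∃ a b : ℝ, l = b - a ∧ Ioo a b ⊆ Ioo (x - ε) (x + ε) \ H} := by
  refine ⟨2 * ε, ?_⟩
  rintro l ⟨a, b, rfl, h⟩
  exact sub_le_two_mul_of_Ioo_subset (h.trans sdiff_subset) hε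

lemma le_gapLength (h : Ioo a b ⊆ Ioo (x - ε) (x + ε) \ H) (hε : 0 ≤ ε) :
    b - a ≤ gapLength H x ε :=
  le_csSup (gapLength_bddAbove hε) ⟨a, b, rfl, h⟩

lemma gapLength_nonneg (hε : 0 ≤ ε) : 0 ≤ gapLength H x ε := by
  simpa using le_gapLength (H := H) (x := x) (a := 0) (b := 0) (by simp) hε

lemma gapLength_le (hε : 0 ≤ ε) : gapLength H x ε ≤ 2 * ε :=
  Real.sSup_le (fun _ ⟨_, _, hl, h⟩ => hl ▸ sub_le_two_mul_of_Ioo_subset (h.trans sdiff_subset) hε)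
    (by linarith)

lemma exists_gap_of_lt_gapLength {l : ℝ} (hl : l < gapLength H x ε) :
    ∃ a b, l < b - a ∧ Ioo a b ⊆ Ioo (x - ε) (x + ε) \ H := by
  obtain ⟨_, ⟨a, b, rfl, h⟩, hlt⟩ := exists_lt_of_lt_csSup (by exact ⟨0, 0, 0, by simp, by simp⟩) hl
  exact ⟨a, b, hlt, h⟩

lemma gapLength_eq_of_disjoint (h : Disjoint (Ioo (x - ε) (x + ε)) H) (hε : 0 ≤ ε) :
    gapLength H x ε = 2 * ε := by
  refine (gapLength_le hε).antisymm ?_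
  have := le_gapLength (H := H) (subset_sdiff.2 ⟨subset_rfl, h⟩) hε
  linarith

lemma porousAt_of_notMem (hH : IsClosed H) (hx : x ∉ H) : PorousAt H x := by
  obtain ⟨δ, hδ, hball⟩ := Metric.isOpen_iff.1 hH.isOpen_compl x hx
  have hratio : (fun ε => gapLength H x ε / ε) =ᶠ[𝓝[>] 0] fun _ => 2 := by
    filter_upwards [Ioo_mem_nhdsGT hδ] with ε hε
    have hdisj : Disjoint (Ioo (x - ε) (x + ε)) H := by
      rw [← Real.ball_eq_Ioo, ← subset_compl_iff_disjoint_right]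
      exact (ball_subset_ball hε.2.le).trans hball
    rw [gapLength_eq_of_disjoint hdisj hε.1.le, mul_div_cancel_right₀ _ hε.1.ne']
  rw [PorousAt, limsup_congr hratio, limsup_const]
  norm_num

lemma PorousAt.exists_frequently_gap (h : PorousAt H x) :
    ∃ κ, 0 < κ ∧ κ ≤ 1 ∧
      ∃ᶠ ε in 𝓝[>] 0, 0 < ε ∧ ∃ a b, κ * ε < b - a ∧ Ioo a b ⊆ Ioo (x - ε) (x + ε) \ H := by
  have hnonneg : ∀ᶠ ε in 𝓝[>] (0 : ℝ), 0 ≤ gapLength H x ε / ε := by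
    filter_upwards [self_mem_nhdsWithin] with ε hε
    exact div_nonneg (gapLength_nonneg hε.le) hε.le
  set κ := min (limsup (fun ε => gapLength H x ε / ε) (𝓝[>] 0) / 2) 1
  have hκ : 0 < κ := lt_min (half_pos h) one_pos
  have hfreq := frequently_lt_of_lt_limsup (isCoboundedUnder_le_of_eventually_le _ hnonneg)
    ((min_le_left _ (1 : ℝ)).trans_lt (half_lt_self h))
  refine ⟨κ, hκ, min_le_right _ _, (hfreq.and_eventually self_mem_nhdsWithin).mono ?_⟩
  rintro ε ⟨hgap, hε⟩
  exact ⟨hε, exists_gap_of_lt_gapLength ((lt_div_iff₀ hε).1 hgap)⟩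

lemma volume_inter_closedBall_add_le_of_gap (h : Ioo a b ⊆ Ioo (x - ε) (x + ε) \ H) :
    volume (H ∩ closedBall x ε) + ENNReal.ofReal (b - a) ≤ volume (closedBall x ε) := by
  have hdisj : Disjoint (H ∩ closedBall x ε) (Ioo a b) :=
    disjoint_left.2 fun _ hy hy' => (h hy').2 hy.1
  rw [← Real.volume_Ioo, ← measure_union hdisj measurableSet_Ioo]
  refine measure_mono (union_subset inter_subset_right ?_)
  rw [← Real.ball_eq_Ioo] at h
  exact (h.trans sdiff_subset).trans ball_subset_closedBall

lemma PorousAt.exists_frequently_volume_inter_closedBall_le (h : PorousAt H x) :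
    ∃ c, 0 < c ∧ c < 1 ∧ ∃ᶠ ε in 𝓝[>] 0,
      volume (H ∩ closedBall x ε) ≤ ENNReal.ofReal c * volume (closedBall x ε) := by
  obtain ⟨κ, hκ, hκ1, hgap⟩ := h.exists_frequently_gap
  refine ⟨1 - κ / 2, by linarith, by linarith, hgap.mono ?_⟩
  rintro ε ⟨hε, a, b, hab, hsub⟩
  have hle := volume_inter_closedBall_add_le_of_gap hsub
  rw [Real.volume_closedBall] at hle ⊢
  calc volume (H ∩ closedBall x ε)
      ≤ ENNReal.ofReal (2 * ε) - ENNReal.ofReal (κ * ε) :=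
        ENNReal.le_sub_of_add_le_right ENNReal.ofReal_ne_top
          ((add_le_add_right (ENNReal.ofReal_le_ofReal hab.le) _).trans hle)
    _ = ENNReal.ofReal (1 - κ / 2) * ENNReal.ofReal (2 * ε) := by
        rw [← ENNReal.ofReal_sub _ (by positivity), ← ENNReal.ofReal_mul (by linarith)]
        ring_nf

/-- The radii are rational so that, for a random set `A`, the condition is measurable. -/
def SparseAt (A : Set ℝ) (c t : ℝ) : Prop :=
  ∃ᶠ q : ℚ in 𝓝[>] 0, volume (A ∩ closedBall t q) ≤ ENNReal.ofReal c * volume (closedBall t q)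

lemma sparseAt_of_frequently_volume_inter_closedBall_le {c c' : ℝ}
    (hc : 0 < c) (hcc' : c < c')
    (h : ∃ᶠ ε in 𝓝[>] 0,
      volume (H ∩ closedBall x ε) ≤ ENNReal.ofReal c * volume (closedBall x ε)) :
    SparseAt H c' x := by
  rw [SparseAt, (nhdsGT_basis (0 : ℚ)).frequently_iff]
  intro u hu
  obtain ⟨ε, hεu, hε⟩ := (nhdsGT_basis (0 : ℝ)).frequently_iff.1 h u (by exact_mod_cast hu)
  have hc' : 0 < c' := hc.trans hcc'
  -- a rational radius `q` just below `ε` loses at most the factor `c' / c`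
  obtain ⟨q, hq1, hq2⟩ := exists_rat_btwn
    (show c / c' * ε < ε from mul_lt_of_lt_one_left hεu.1 ((div_lt_one hc').2 hcc'))
  have hq0 : 0 < (q : ℝ) := lt_trans (by have := hεu.1; positivity) hq1
  refine ⟨q, ⟨by exact_mod_cast hq0, by exact_mod_cast hq2.trans hεu.2⟩, ?_⟩
  have hcq : c * ε ≤ c' * q := by
    rw [div_mul_eq_mul_div, div_lt_iff₀ hc'] at hq1
    linarith
  calc volume (H ∩ closedBall x q)
      ≤ volume (H ∩ closedBall x ε) :=
        measure_mono (inter_subset_inter_right _ (closedBall_subset_closedBall hq2.le))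
    _ ≤ ENNReal.ofReal c * volume (closedBall x ε) := hε
    _ ≤ ENNReal.ofReal c' * volume (closedBall x q) := by
        rw [Real.volume_closedBall, Real.volume_closedBall, ← ENNReal.ofReal_mul hc.le,
          ← ENNReal.ofReal_mul hc'.le]
        exact ENNReal.ofReal_le_ofReal (by linarith)

lemma PorousAt.exists_sparseAt (h : PorousAt H x) :
    ∃ c : ℚ, c < 1 ∧ SparseAt H c x := by
  obtain ⟨c, hc, hc1, hfreq⟩ := h.exists_frequently_volume_inter_closedBall_le
  obtain ⟨c', hcc', hc'1⟩ := exists_rat_btwn hc1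
  exact ⟨c', by exact_mod_cast hc'1,
    sparseAt_of_frequently_volume_inter_closedBall_le hc hcc' hfreq⟩

lemma SparseAt.not_tendsto {c : ℝ} (h : SparseAt H c x) (hc : c < 1) :
    ¬ Tendsto (fun r => volume (H ∩ closedBall x r) / volume (closedBall x r)) (𝓝[>] 0)
      (𝓝 1) := by
  intro hT
  have hcoe : Tendsto (fun q : ℚ => (q : ℝ)) (𝓝[>] 0) (𝓝[>] 0) := by
    have := (Rat.continuous_coe_real.continuousWithinAt (s := Ioi 0) (x := 0)).tendsto_nhdsWithin
      (t := Ioi 0) fun q (hq : (0 : ℚ) < q) => show (0 : ℝ) < q by exact_mod_cast hq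
    rwa [Rat.cast_zero] at this
  have hev := (hT.comp hcoe).eventually (eventually_gt_nhds (ENNReal.ofReal_lt_one.2 hc))
  obtain ⟨q, hle, hlt⟩ := (h.and_eventually hev).exists
  exact (ENNReal.div_le_of_le_mul hle).not_gt hlt

end Sparse

lemma volume_setOf_sparseAt_eq_zero (A : Set ℝ) :
    volume {t | t ∈ A ∧ ∃ c : ℚ, c < 1 ∧ SparseAt A c t} = 0 := by
  have hdensity := ae_iff.1 (Besicovitch.ae_tendsto_measure_inter_div volume A)
  refine measure_mono_null ?_ (le_zero_iff.1 ((Measure.le_restrict_apply _ _).trans_eq hdensity))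
  rintro t ⟨htA, c, hc, hsparse⟩
  exact ⟨hsparse.not_tendsto (by exact_mod_cast hc), htA⟩

lemma measurableSet_setOf_frequently {α ι κ : Type*} [MeasurableSpace α] [Countable ι]
    [Countable κ] {l : Filter ι} {P : κ → Prop} {s : κ → Set ι} (hl : l.HasBasis P s)
    {p : ι → α → Prop} (hp : ∀ i, MeasurableSet {x | p i x}) :
    MeasurableSet {x | ∃ᶠ i in l, p i x} := by
  simp only [hl.frequently_iff, ofPred_forall, ofPred_exists, ofPred_and]
  exact .iInter fun k => .iInter fun _ => .iUnion fun i => (MeasurableSet.const _).inter (hp i)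

section RandomSet

variable {Ω : Type*} [MeasurableSpace Ω] {H : Ω → Set ℝ}

lemma measurable_measure_inter_closedBall (hgraph : MeasurableSet {p : ℝ × Ω | p.1 ∈ H p.2})
    (μ : Measure ℝ) [SFinite μ] (r : ℝ) :
    Measurable fun p : ℝ × Ω => μ (H p.2 ∩ closedBall p.1 r) := by
  have hs : MeasurableSet {x : (ℝ × Ω) × ℝ | x.2 ∈ H x.1.2 ∧ dist x.2 x.1.1 ≤ r} :=
    (hgraph.preimage (measurable_snd.prodMk measurable_fst.snd)).inter
      (measurableSet_le (measurable_snd.dist measurable_fst.fst) measurable_const)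
  exact measurable_measure_prodMk_left hs

lemma measurableSet_setOf_sparseAt (hgraph : MeasurableSet {p : ℝ × Ω | p.1 ∈ H p.2}) :
    MeasurableSet {p : ℝ × Ω | ∃ c : ℚ, c < 1 ∧ SparseAt (H p.2) c p.1} := by
  simp only [ofPred_exists, ofPred_and]
  refine .iUnion fun c => (MeasurableSet.const _).inter ?_
  refine measurableSet_setOf_frequently (nhdsGT_basis 0) fun q => ?_
  simp only [Real.volume_closedBall]
  exact measurableSet_le (measurable_measure_inter_closedBall hgraph volume q) measurable_const

end RandomSet

lemma ae_measure_prodMk_eq_zero {α β : Type*} [MeasurableSpace α] [MeasurableSpace β]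
    {μ : Measure α} {ν : Measure β} [SFinite μ] [SFinite ν] {s : Set (α × β)}
    (hs : MeasurableSet s) (h : ∀ y, μ ((·, y) ⁻¹' s) = 0) :
    ∀ᵐ x ∂μ, ν (Prod.mk x ⁻¹' s) = 0 :=
  (Measure.measure_prod_null hs).1 (by simp [Measure.prod_apply_symm hs, h])

theorem notMem_iff_porousAt_one_ae_general
    {Ω : Type*} [MeasurableSpace Ω] (P : Measure Ω) [IsProbabilityMeasure P]
    (H : Ω → Set ℝ)
    (hclosed : ∀ ω, IsClosed (H ω))
    (hgraph : MeasurableSet {p : ℝ × Ω | p.1 ∈ H p.2})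
    (hscale : ∀ c : ℝ, 0 < c → ∀ t : ℝ, 0 < t →
      P {ω | t ∈ H ω ∧ PorousAt (H ω) t} = P {ω | c * t ∈ H ω ∧ PorousAt (H ω) (c * t)}) :
    {ω | 1 ∉ H ω} ⊆ {ω | PorousAt (H ω) 1} ∧
      P ({ω | PorousAt (H ω) 1} \ {ω | 1 ∉ H ω}) = 0 := by
  refine ⟨fun ω h1 => porousAt_of_notMem (hclosed ω) h1, ?_⟩
  set S := {p : ℝ × Ω | p.1 ∈ H p.2 ∧ ∃ c : ℚ, c < 1 ∧ SparseAt (H p.2) c p.1}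
  have hS : MeasurableSet S := hgraph.inter (measurableSet_setOf_sparseAt hgraph)
  have hsections : ∀ᵐ t, P (Prod.mk t ⁻¹' S) = 0 :=
    ae_measure_prodMk_eq_zero hS fun ω => volume_setOf_sparseAt_eq_zero (H ω)
  obtain ⟨t, ht, hPt⟩ := Measure.exists_mem_of_measure_ne_zero_of_ae
    (by simp : volume (Ioi (0 : ℝ)) ≠ 0) (ae_restrict_of_ae hsections)
  have hevent : {ω | PorousAt (H ω) 1} \ {ω | 1 ∉ H ω} = {ω | 1 ∈ H ω ∧ PorousAt (H ω) 1} := by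
    ext; simp [and_comm]
  rw [hevent, hscale t ht 1 one_pos, mul_one]
  refine measure_mono_null ?_ hPt
  rintro ω ⟨htH, hporous⟩
  exact ⟨htH, hporous.exists_sparseAt⟩

/-- Let `H` be a random closed subset of `[0, ∞)` with product-measurable
graph, whose law is scaling invariant in the sense that
`P (t ∈ H ∧ H porous at t) = P (c*t ∈ H ∧ H porous at c*t)` for all `c, t > 0`.
Then `{1 ∉ H} ⊆ {H is porous at 1}` and `P ({H is porous at 1} \ {1 ∉ H}) = 0`,
i.e. the two events coincide up to a `P`-null set. -/
theorem notMem_iff_porousAt_one_ae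
    {Ω : Type*} [MeasurableSpace Ω] (P : Measure Ω) [IsProbabilityMeasure P]
    (H : Ω → Set ℝ)
    (hclosed : ∀ ω, IsClosed (H ω)) (hsub : ∀ ω, H ω ⊆ Set.Ici (0 : ℝ))
    (hgraph : MeasurableSet {p : ℝ × Ω | p.1 ∈ H p.2})
    (hscale : ∀ c : ℝ, 0 < c → ∀ t : ℝ, 0 < t →
      P {ω | t ∈ H ω ∧ PorousAt (H ω) t} = P {ω | c * t ∈ H ω ∧ PorousAt (H ω) (c * t)}) :
    {ω | 1 ∉ H ω} ⊆ {ω | PorousAt (H ω) 1} ∧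
      P ({ω | PorousAt (H ω) 1} \ {ω | 1 ∉ H ω}) = 0 :=
  notMem_iff_porousAt_one_ae_general P H hclosed hgraph hscale
end

section
/- Let (a_k)_{k≥1} be a non-increasing sequence of positive real numbers tending to zero, and for x > 0 let n(x) = inf{k ≥ 1 : a_k < x}. Then liminf_{k→∞} a_{k+1}/a_k = liminf_{x→0+} a_{n(x)}/x. -/
open Filter Topology Set

/-!
Write `f k = a (k + 1) / a k` and `g x = a (n x) / x` with `n = hittingIndex a`. Both take
values in `[0, 1]`, so it suffices to show that for every `c`, `f < c` frequently as `k → ∞`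
if and only if `g < c` frequently as `x → 0+`. Since `n (a k) > k`, we have `g (a k) ≤ f k`,
and `a k → 0+`. Conversely `x ≤ a (n x - 1)` gives `f (n x - 1) ≤ g x`, and `n x → ∞` as
`x → 0+`.
-/

theorem liminf_le_liminf_of_frequently_lt_imp {α β γ : Type*}
    [ConditionallyCompleteLinearOrder γ] [DenselyOrdered γ]
    {la : Filter α} {lb : Filter β} {u : α → γ} {v : β → γ}
    (hu : la.IsBoundedUnder (· ≥ ·) u) (hv : lb.IsCoboundedUnder (· ≥ ·) v)
    (h : ∀ c, (∃ᶠ y in lb, v y < c) → ∃ᶠ x in la, u x < c) :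
    liminf u la ≤ liminf v lb :=
  le_of_forall_gt_imp_ge_of_dense fun _ hc =>
    liminf_le_of_frequently_le ((h _ (frequently_lt_of_liminf_lt hv hc)).mono fun _ => le_of_lt) hu

noncomputable def hittingIndex (a : ℕ → ℝ) (x : ℝ) : ℕ := sInf {k | 1 ≤ k ∧ a k < x}

section HittingIndex

variable {a : ℕ → ℝ} {x : ℝ}

theorem hittingIndex_spec (hlim : Tendsto a atTop (𝓝 0)) (hx : 0 < x) :
    1 ≤ hittingIndex a x ∧ a (hittingIndex a x) < x := by
  obtain ⟨k, hk, hk1⟩ := ((hlim.eventually (gt_mem_nhds hx)).and (eventually_ge_atTop 1)).exists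
  exact Nat.sInf_mem (s := {k | 1 ≤ k ∧ a k < x}) ⟨k, hk1, hk⟩

theorem le_of_lt_hittingIndex {m : ℕ} (hm : 1 ≤ m) (h : m < hittingIndex a x) : x ≤ a m :=
  not_lt.1 fun hlt => Nat.notMem_of_lt_sInf h ⟨hm, hlt⟩

theorem lt_hittingIndex (hanti : AntitoneOn a (Ici 1)) (hlim : Tendsto a atTop (𝓝 0))
    (hx : 0 < x) {k : ℕ} (hk : 1 ≤ k) (hxk : x ≤ a k) : k < hittingIndex a x := by
  obtain ⟨h1, hlt⟩ := hittingIndex_spec hlim hx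
  by_contra! hle
  exact (hxk.trans (hanti h1 hk hle)).not_gt hlt

theorem tendsto_hittingIndex (hpos : ∀ k, 1 ≤ k → 0 < a k) (hanti : AntitoneOn a (Ici 1))
    (hlim : Tendsto a atTop (𝓝 0)) : Tendsto (hittingIndex a) (𝓝[>] 0) atTop := by
  refine tendsto_atTop.2 fun M => ?_
  filter_upwards [Ioc_mem_nhdsGT (hpos (M + 1) le_add_self)] with x ⟨hx, hxa⟩
  exact (Nat.le_succ M).trans (lt_hittingIndex hanti hlim hx le_add_self hxa).le

theorem hittingIndex_div_le_div (hpos : ∀ k, 1 ≤ k → 0 < a k) (hanti : AntitoneOn a (Ici 1))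
    (hlim : Tendsto a atTop (𝓝 0)) {k : ℕ} (hk : 1 ≤ k) :
    a (hittingIndex a (a k)) / a k ≤ a (k + 1) / a k := by
  have hN := lt_hittingIndex hanti hlim (hpos k hk) hk le_rfl
  exact div_le_div_of_nonneg_right (hanti (Nat.le_add_left 1 k) (hk.trans hN.le) hN)
    (hpos k hk).le

theorem div_le_hittingIndex_div (hpos : ∀ k, 1 ≤ k → 0 < a k) (hx : 0 < x) {m : ℕ}
    (hm : 1 ≤ m) (h : m + 1 = hittingIndex a x) :
    a (m + 1) / a m ≤ a (hittingIndex a x) / x := by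
  rw [h]
  exact div_le_div_of_nonneg_left (hpos _ (by omega)).le hx (le_of_lt_hittingIndex hm (by omega))

end HittingIndex

/-- Let `(a k)_{k ≥ 1}` be a non-increasing sequence of positive reals
tending to `0`, and for `x > 0` let `n x = inf {k ≥ 1 : a k < x}`. Then
`liminf_{k→∞} a (k+1) / a k = liminf_{x→0+} a (n x) / x`. -/
theorem liminf_ratio_eq_liminf_hitting
    (a : ℕ → ℝ) (hpos : ∀ k, 1 ≤ k → 0 < a k)
    (hanti : ∀ k, 1 ≤ k → a (k + 1) ≤ a k)
    (hlim : Tendsto a atTop (𝓝 0)) :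
    Filter.liminf (fun k => a (k + 1) / a k) atTop =
      Filter.liminf (fun x => a (sInf {k | 1 ≤ k ∧ a k < x}) / x) (𝓝[>] (0 : ℝ)) := by
  have hanti' : AntitoneOn a (Ici 1) := antitoneOn_nat_Ici_of_succ_le hanti
  have hN := tendsto_hittingIndex hpos hanti' hlim
  have hf : ∀ᶠ k in atTop, a (k + 1) / a k ∈ Icc 0 1 := by
    filter_upwards [eventually_ge_atTop 1] with k hk
    exact ⟨div_nonneg (hpos _ (by omega)).le (hpos k hk).le,
      div_le_one_of_le₀ (hanti k hk) (hpos k hk).le⟩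
  have hg : ∀ᶠ x in 𝓝[>] (0 : ℝ), a (hittingIndex a x) / x ∈ Icc 0 1 := by
    filter_upwards [self_mem_nhdsWithin] with x hx
    obtain ⟨h1, hlt⟩ := hittingIndex_spec hlim hx
    exact ⟨div_nonneg (hpos _ h1).le hx.le, div_le_one_of_le₀ hlt.le hx.le⟩
  apply le_antisymm
  · have hpred : Tendsto (fun x => hittingIndex a x - 1) (𝓝[>] 0) atTop :=
      (tendsto_sub_atTop_nat 1).comp hN
    refine liminf_le_liminf_of_frequently_lt_imp (isBoundedUnder_of_eventually_ge
      (hf.mono fun _ h => h.1)) (isCoboundedUnder_ge_of_eventually_le _ (hg.mono fun _ h => h.2))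
      fun c hc => hpred.frequently (hc.mp ?_)
    filter_upwards [self_mem_nhdsWithin, hN.eventually (eventually_ge_atTop 2)] with x hx h2 hlt
    exact (div_le_hittingIndex_div hpos hx (by omega) (by omega)).trans_lt hlt
  · have ha : Tendsto a atTop (𝓝[>] 0) :=
      tendsto_nhdsWithin_iff.2 ⟨hlim, eventually_atTop.2 ⟨1, hpos⟩⟩
    refine liminf_le_liminf_of_frequently_lt_imp (isBoundedUnder_of_eventually_ge
      (hg.mono fun _ h => h.1)) (isCoboundedUnder_ge_of_eventually_le _ (hf.mono fun _ h => h.2))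
      fun c hc => ha.frequently (hc.mp ?_)
    filter_upwards [eventually_ge_atTop 1] with k hk hlt
    exact (hittingIndex_div_le_div hpos hanti' hlim hk).trans_lt hlt
end

section
/- Let (η_n)_{n≥0} be a sequence of real-valued random variables on a probability space (Ω, F, P) with inf_{n≥0} |η_n| = 0 almost surely. For n ≥ 1 define Z_n = min_{0≤k<n} |η_k|, and for x > 0 define ν(x) = inf{n ≥ 0 : |η_n| < x} (which is finite almost surely for every x > 0). Then the family {x·ν(x) : x ∈ (0,1)} is tight if and only if the family {n·Z_n : n ≥ 1} is tight. -/
/-! The two families are dual: for `n ≥ 1` and `x > 0` with `|η m| < x` for some `m`,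
`x ≤ Z_n ↔ n ≤ ν(x)`. So `x ν(x) > K` forces `n Z_n > K` at `n = ⌊K/x⌋ + 1`, and conversely
`n Z_n > K` forces `x ν(x) ≥ x n` for every `x ≤ K / n`. The only indices `n` that no `x < 1`
can reach are the small ones, where `n Z_n ≤ n |η 0|` and the tail of the single random
variable `|η 0|` takes over. -/

open MeasureTheory Filter Topology

/-- A family `(ξ i)_{i ∈ I}` of real random variables is tight if
`sup_i P (|ξ i| > K) → 0` as `K → ∞`. -/
def IsTightFamily {Ω : Type*} [MeasurableSpace Ω] (P : Measure Ω)
    {I : Type*} (ξ : I → Ω → ℝ) : Prop :=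
  Tendsto (fun K : ℝ => ⨆ i, P {ω | K < |ξ i ω|}) atTop (𝓝 0)

/-- `runMin η n ω = min_{0 ≤ k < n} |η k ω|`. -/
noncomputable def runMin {Ω : Type*} (η : ℕ → Ω → ℝ) (n : ℕ) (ω : Ω) : ℝ :=
  sInf ((fun k => |η k ω|) '' Set.Iio n)

/-- `hitTime η x ω = inf {n ≥ 0 : |η n ω| < x}`. -/
noncomputable def hitTime {Ω : Type*} (η : ℕ → Ω → ℝ) (x : ℝ) (ω : Ω) : ℕ :=
  sInf {n | |η n ω| < x}

section Pathwise

variable {Ω : Type*} (η : ℕ → Ω → ℝ) {n : ℕ} {x K : ℝ} (ω : Ω)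

lemma runMin_nonneg : 0 ≤ runMin η n ω :=
  Real.sInf_nonneg <| Set.forall_mem_image.2 fun _ _ => abs_nonneg _

lemma runMin_le_abs {k : ℕ} (hk : k < n) : runMin η n ω ≤ |η k ω| :=
  csInf_le ((Set.finite_Iio n).image _).bddBelow ⟨k, hk, rfl⟩

lemma le_runMin_iff (hn : 0 < n) : x ≤ runMin η n ω ↔ ∀ k < n, x ≤ |η k ω| := by
  rw [runMin, le_csInf_iff ((Set.finite_Iio n).image _).bddBelow ⟨_, 0, hn, rfl⟩]
  exact Set.forall_mem_image

lemma le_abs_of_lt_hitTime {k : ℕ} (hk : k < hitTime η x ω) : x ≤ |η k ω| :=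
  not_lt.1 (Nat.notMem_of_lt_sInf hk)

/-- Without some `|η m ω| < x` the hitting time is the junk value `sInf ∅ = 0`. -/
lemma le_hitTime_iff (hx : ∃ m, |η m ω| < x) :
    n ≤ hitTime η x ω ↔ ∀ k < n, x ≤ |η k ω| := by
  refine ⟨fun h k hk => le_abs_of_lt_hitTime η ω (hk.trans_le h), fun h => ?_⟩
  by_contra! hlt
  exact (h _ hlt).not_gt (Nat.sInf_mem hx)

lemma le_runMin_of_le_hitTime (hn : 0 < n) (h : n ≤ hitTime η x ω) : x ≤ runMin η n ω :=
  (le_runMin_iff η ω hn).2 fun _ hk => le_abs_of_lt_hitTime η ω (hk.trans_le h)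

lemma le_hitTime_of_le_runMin (hx : ∃ m, |η m ω| < x) (h : x ≤ runMin η n ω) :
    n ≤ hitTime η x ω := by
  rcases Nat.eq_zero_or_pos n with rfl | hn
  · exact Nat.zero_le _
  · exact (le_hitTime_iff η ω hx).2 ((le_runMin_iff η ω hn).1 h)

lemma lt_mul_runMin_of_lt_mul_hitTime (hx : 0 < x) (hK : 0 ≤ K)
    (h : K < x * hitTime η x ω) :
    K < ((⌊K / x⌋₊ + 1 : ℕ) : ℝ) * runMin η (⌊K / x⌋₊ + 1) ω := by
  set n := ⌊K / x⌋₊ + 1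
  have hKn : K < n * x := by
    rw [← div_lt_iff₀ hx]
    exact_mod_cast Nat.lt_floor_add_one (K / x)
  have hn : n ≤ hitTime η x ω :=
    (Nat.floor_lt (div_nonneg hK hx.le)).2 ((div_lt_iff₀' hx).2 h)
  calc K < n * x := hKn
    _ ≤ n * runMin η n ω :=
      mul_le_mul_of_nonneg_left (le_runMin_of_le_hitTime η ω (Nat.succ_pos _) hn) n.cast_nonneg

lemma le_hitTime_of_lt_mul_runMin (hx : ∃ m, |η m ω| < x) (hxK : n * x ≤ K)
    (h : K < n * runMin η n ω) : n ≤ hitTime η x ω :=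
  le_hitTime_of_le_runMin η ω hx (lt_of_mul_lt_mul_left (hxK.trans_lt h) n.cast_nonneg).le

end Pathwise

section Tightness

variable {Ω : Type*} [MeasurableSpace Ω] {P : Measure Ω} {η : ℕ → Ω → ℝ}

lemma isTightFamily_iff {I : Type*} {ξ : I → Ω → ℝ} :
    IsTightFamily P ξ ↔ ∀ ε > 0, ∀ᶠ K in atTop, ∀ i, P {ω | K < |ξ i ω|} ≤ ε := by
  simp only [IsTightFamily, ENNReal.tendsto_nhds_zero, iSup_le_iff]

lemma tendsto_measure_lt_abs_atTop [IsFiniteMeasure P] {f : Ω → ℝ} (hf : Measurable f) :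
    Tendsto (fun K : ℝ => P {ω | K < |f ω|}) atTop (𝓝 0) := by
  have hempty : (⋂ K : ℝ, {ω | K < |f ω|}) = ∅ :=
    Set.iInter_eq_empty_iff.2 fun ω => ⟨|f ω|, (lt_irrefl _ : ¬ |f ω| < |f ω|)⟩
  simpa [Function.comp_def, hempty] using tendsto_measure_iInter_atTop
    (fun K => (measurableSet_lt measurable_const hf.abs).nullMeasurableSet)
    (fun a b hab ω (hω : b < |f ω|) => hab.trans_lt hω) ⟨0, measure_ne_top P _⟩

lemma isTightFamily_hitTime_of_runMin
    (h : IsTightFamily P fun n : {n : ℕ // 1 ≤ n} => fun ω => ((n : ℕ) : ℝ) * runMin η n ω) :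
    IsTightFamily P fun x : Set.Ioo (0 : ℝ) 1 => fun ω => (x : ℝ) * hitTime η x ω := by
  rw [isTightFamily_iff] at h ⊢
  intro ε hε
  filter_upwards [h ε hε, eventually_ge_atTop 0] with K hKε hK
  rintro ⟨x, hx, -⟩
  refine (measure_mono fun ω (hω : K < |x * hitTime η x ω|) => ?_).trans
    (hKε ⟨⌊K / x⌋₊ + 1, Nat.le_add_left 1 _⟩)
  rw [abs_of_nonneg (by positivity)] at hω
  exact (lt_mul_runMin_of_lt_mul_hitTime η ω hx hK hω).trans_le (le_abs_self _)

lemma isTightFamily_runMin_of_hitTime [IsFiniteMeasure P] (hη₀ : Measurable (η 0))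
    (hinf : ∀ᵐ ω ∂P, ⨅ n, |η n ω| = 0)
    (h : IsTightFamily P fun x : Set.Ioo (0 : ℝ) 1 => fun ω => (x : ℝ) * hitTime η x ω) :
    IsTightFamily P fun n : {n : ℕ // 1 ≤ n} => fun ω => ((n : ℕ) : ℝ) * runMin η n ω := by
  rw [isTightFamily_iff] at h ⊢
  intro ε hε
  obtain ⟨A, ⟨hhit, htail⟩, hA⟩ := ((h ε hε).and (ENNReal.tendsto_nhds_zero.1
    (tendsto_measure_lt_abs_atTop (P := P) hη₀) ε hε) |>.and (eventually_ge_atTop 1)).exists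
  filter_upwards [eventually_ge_atTop (2 * A ^ 2)] with K hK
  rintro ⟨n, hn⟩
  have hn₀ : (0 : ℝ) < n := by exact_mod_cast hn
  by_cases hsmall : n * A ≤ K
  · refine (measure_mono fun ω (hω : K < |n * runMin η n ω|) => ?_).trans htail
    rw [abs_of_nonneg (mul_nonneg n.cast_nonneg (runMin_nonneg η ω))] at hω
    have : (n : ℝ) * A < n * |η 0 ω| := calc
      (n : ℝ) * A ≤ K := hsmall
      _ < n * runMin η n ω := hω
      _ ≤ n * |η 0 ω| := mul_le_mul_of_nonneg_left (runMin_le_abs η ω hn) n.cast_nonneg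
    exact lt_of_mul_lt_mul_left this n.cast_nonneg
  · have hx : 2 * A / n ∈ Set.Ioo (0 : ℝ) 1 :=
      ⟨by positivity, (div_lt_one hn₀).2 (by nlinarith)⟩
    refine (measure_mono_ae ?_).trans (hhit ⟨_, hx⟩)
    filter_upwards [hinf] with ω hω (hωK : K < |n * runMin η n ω|)
    rw [abs_of_nonneg (mul_nonneg n.cast_nonneg (runMin_nonneg η ω))] at hωK
    have hle : n ≤ hitTime η (2 * A / n) ω := by
      refine le_hitTime_of_lt_mul_runMin η ω (exists_lt_of_ciInf_lt (hω ▸ hx.1)) ?_ hωK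
      rw [mul_div_cancel₀ _ hn₀.ne']
      nlinarith
    calc A < 2 * A / n * n := by rw [div_mul_cancel₀ _ hn₀.ne']; linarith
      _ ≤ 2 * A / n * hitTime η (2 * A / n) ω := by gcongr
      _ ≤ _ := le_abs_self _

end Tightness

/-- Let `(η n)` be real random variables with `inf_n |η n| = 0` a.s.;
let `Z n = min_{k < n} |η k|` (for `n ≥ 1`) and `ν x = inf {n : |η n| < x}` (for `x > 0`).
Then the family `{x • ν x : x ∈ (0,1)}` is tight iff the family `{n • Z n : n ≥ 1}` is. -/
theorem tight_hitTime_iff_tight_runMin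
    {Ω : Type*} [MeasurableSpace Ω] (P : Measure Ω) [IsProbabilityMeasure P]
    (η : ℕ → Ω → ℝ) (hmeas : ∀ n, Measurable (η n))
    (hinf : ∀ᵐ ω ∂P, ⨅ n, |η n ω| = 0) :
    IsTightFamily P (fun x : Set.Ioo (0 : ℝ) 1 =>
        fun ω => (x : ℝ) * (hitTime η (x : ℝ) ω : ℝ)) ↔
      IsTightFamily P (fun n : {n : ℕ // 1 ≤ n} =>
        fun ω => ((n : ℕ) : ℝ) * runMin η (n : ℕ) ω) :=
  ⟨isTightFamily_runMin_of_hitTime (hmeas 0) hinf, isTightFamily_hitTime_of_runMin⟩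
end
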